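/- arXiv:1412.3795 — 2 statements merged into one kernel-verified Lean document; each statement's English description precedes it below -/
import Mathlib

section
/- For every δ ∈ A and μ ∈ F, the set (H_m \ R_δ) ∪ (R_δ + μ·e^{(δ)}) is a 1-perfect code of length n. -/
/-! The Hamming code `H` is 1-perfect, and replacing a subcode `R ⊆ H` by any 1-code with the
same radius-1 neighbourhood keeps a code 1-perfect. The translate `R_δ + μ e^{(δ)}` is a 1-code
since `H` has minimum distance 3. Its neighbourhood is that of `R_δ` because every
`e ∈ H \ R_δ` is at distance at least 3 from each word `a e^{(δ)}`: if `e_δ = 0` this distance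
is at least `wt e ≥ 3`, and if `e_δ ≠ 0` then `wt e ≠ 3` (a weight-3 codeword through `δ` lies
in `R_δ`), so `wt e ≥ 4`. -/

variable {F : Type*} [Field F] [Fintype F] [DecidableEq F] {m : ℕ}

def IsProj (α : Fin m → F) : Prop :=
  ∃ i, α i = 1 ∧ ∀ j < i, α j = 0

instance : DecidablePred (IsProj (F := F) (m := m)) :=
  fun α => decidable_of_iff (∃ i, α i = 1 ∧ ∀ j < i, α j = 0) Iff.rfl

/-- The projective points: nonzero vectors with first nonzero coordinate 1. -/
abbrev PA (F : Type*) [Field F] [Fintype F] [DecidableEq F] (m : ℕ) : Type _ :=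
  {α : Fin m → F // IsProj α}

/-- The Hamming code of length (q^m-1)/(q-1). -/
def Hcode (F : Type*) [Field F] [Fintype F] [DecidableEq F] (m : ℕ) : Set (PA F m → F) :=
  {c | ∑ α : PA F m, c α • (α : Fin m → F) = 0}

/-- Zero-extension of a vector of F^m to a word indexed by PA F m. -/
def bar (α : Fin m → F) : PA F m → F :=
  fun β => ∑ i, if (β : Fin m → F) = Pi.single i 1 then α i else 0

/-- The linear δ-component: span of the weight-3 codewords with value 1 at δ. -/
def Rcomp (δ : PA F m) : Submodule F (PA F m → F) :=
  Submodule.span F {c | c ∈ Hcode F m ∧ hammingNorm c = 3 ∧ c δ = 1}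

/-- A 1-perfect code: radius-1 balls around codewords partition the space. -/
def IsPerfect {ι : Type*} [Fintype ι] (P : Set (ι → F)) : Prop :=
  ∀ z : ι → F, ∃! c, c ∈ P ∧ hammingDist z c ≤ 1

/-- A 1-code: radius-1 balls around codewords are pairwise disjoint. -/
def IsOneCode {ι : Type*} [Fintype ι] (C : Set (ι → F)) : Prop :=
  ∀ x ∈ C, ∀ y ∈ C, x ≠ y → ∀ z, ¬(hammingDist x z ≤ 1 ∧ hammingDist y z ≤ 1)

/-- The radius-1 neighborhood of a set of words. -/
def nbhd {ι : Type*} [Fintype ι] (M : Set (ι → F)) : Set (ι → F) :=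
  {y | ∃ x ∈ M, hammingDist x y ≤ 1}

/-- The projective point corresponding to the standard basis vector π^(i). -/
def singleProj (i : Fin m) : PA F m :=
  ⟨Pi.single i 1, i, by simp, fun j hj => Pi.single_eq_of_ne (Fin.ne_of_lt hj) 1⟩

/-- The projective point (1, x). -/
def consProj {s : ℕ} (x : Fin s → F) : PA F (s+1) :=
  ⟨Fin.cons 1 x, 0, by simp, fun j hj => absurd hj (by simp)⟩

section Hamming

variable {ι : Type*} [Fintype ι]

lemma hammingDist_add_right {G : Type*} [AddGroup G] [DecidableEq G] (x y v : ι → G) :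
    hammingDist (x + v) (y + v) = hammingDist x y := by
  simp only [hammingDist, Pi.add_apply, ne_eq, add_left_inj]

variable {G : Type*} [Zero G] [DecidableEq G] [DecidableEq ι]

lemma hammingNorm_single_le_one (i : ι) (a : G) : hammingNorm (Pi.single i a : ι → G) ≤ 1 := by
  have hsupp : ∀ j ∈ ({j | (Pi.single i a : ι → G) j ≠ 0} : Finset ι), j = i := fun j hj =>
    by_contra fun hji => (Finset.mem_filter.1 hj).2 (Pi.single_eq_of_ne hji (M := fun _ => G) a)
  exact Finset.card_le_one.2 fun x hx y hy => (hsupp x hx).trans (hsupp y hy).symm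

lemma hammingNorm_le_hammingDist_single {x : ι → G} {i : ι} (hi : x i = 0) (a : G) :
    hammingNorm x ≤ hammingDist x (Pi.single i a) := by
  refine Finset.card_le_card fun j hj => ?_
  simp only [Finset.mem_filter, Finset.mem_univ, true_and] at hj ⊢
  have hji : j ≠ i := fun h => hj (h ▸ hi)
  rwa [Pi.single_eq_of_ne hji]

lemma hammingNorm_update_zero_add_one {x : ι → G} {i : ι} (hi : x i ≠ 0) :
    hammingNorm (Function.update x i 0) + 1 = hammingNorm x := by
  have hsupp : ({j | Function.update x i 0 j ≠ 0} : Finset ι) =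
      ({j | x j ≠ 0} : Finset ι).erase i := by
    ext j
    by_cases hj : j = i <;> simp [hj, Function.update_apply]
  rw [hammingNorm, hsupp, Finset.card_erase_add_one (by simpa using hi)]
  rfl

lemma eq_single_of_hammingNorm_le_one {x : ι → G} (hx : hammingNorm x ≤ 1) {i : ι}
    (hi : x i ≠ 0) : x = Pi.single i (x i) := by
  ext j
  by_cases hji : j = i
  · subst hji; simp
  · rw [Pi.single_eq_of_ne hji]
    by_contra hj
    exact hji (Finset.card_le_one.1 hx j (by simpa using hj) i (by simpa using hi))

end Hamming

section Switching

variable {K ι : Type*} [DecidableEq K] [Fintype ι]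

lemma isOneCode_of_three_le_hammingDist {C : Set (ι → K)}
    (hC : ∀ x ∈ C, ∀ y ∈ C, x ≠ y → 3 ≤ hammingDist x y) : IsOneCode C := by
  rintro x hx y hy hne z ⟨hxz, hyz⟩
  have := hammingDist_triangle_right x y z
  have := hC x hx y hy hne
  omega

lemma IsOneCode.mono {C D : Set (ι → K)} (hC : IsOneCode C) (hDC : D ⊆ C) : IsOneCode D :=
  fun x hx y hy => hC x (hDC hx) y (hDC hy)

lemma IsOneCode.image_add [AddGroup K] {C : Set (ι → K)} (hC : IsOneCode C) (v : ι → K) :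
    IsOneCode ((· + v) '' C) := by
  rintro _ ⟨x, hx, rfl⟩ _ ⟨y, hy, rfl⟩ hne z
  rw [← sub_add_cancel z v, hammingDist_add_right, hammingDist_add_right]
  exact hC x hx y hy (fun h => hne (h ▸ rfl)) (z - v)

lemma IsOneCode.isPerfect {C : Set (ι → K)} (hC : IsOneCode C) (hcover : nbhd C = Set.univ) :
    IsPerfect C := by
  intro z
  obtain ⟨c, hc, hcz⟩ : z ∈ nbhd C := hcover ▸ Set.mem_univ z
  refine ⟨c, ⟨hc, by rwa [hammingDist_comm]⟩, fun p ⟨hp, hpz⟩ => ?_⟩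
  by_contra hne
  exact hC p hp c hc hne z ⟨by rwa [hammingDist_comm], hcz⟩

theorem IsPerfect.switch {C R R' : Set (ι → K)} (hC : IsPerfect C) (hRC : R ⊆ C)
    (hR' : IsOneCode R') (hnbhd : nbhd R' = nbhd R) : IsPerfect ((C \ R) ∪ R') := by
  intro z
  obtain ⟨c, ⟨hcC, hcz⟩, hc_uniq⟩ := hC z
  by_cases hcR : c ∈ R
  · obtain ⟨r, hr, hrz⟩ : z ∈ nbhd R' := hnbhd ▸ ⟨c, hcR, by rwa [hammingDist_comm]⟩
    refine ⟨r, ⟨Or.inr hr, by rwa [hammingDist_comm]⟩, ?_⟩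
    rintro p ⟨⟨hpC, hpR⟩ | hp, hpz⟩
    · exact absurd (hc_uniq p ⟨hpC, hpz⟩ ▸ hcR) hpR
    · by_contra hne
      exact hR' p hp r hr hne z ⟨by rwa [hammingDist_comm], hrz⟩
  · refine ⟨c, ⟨Or.inl ⟨hcC, hcR⟩, hcz⟩, ?_⟩
    rintro p ⟨⟨hpC, -⟩ | hp, hpz⟩
    · exact hc_uniq p ⟨hpC, hpz⟩
    · obtain ⟨r, hr, hrz⟩ : z ∈ nbhd R := hnbhd ▸ ⟨p, hp, by rwa [hammingDist_comm]⟩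
      exact absurd (hc_uniq r ⟨hRC hr, by rwa [hammingDist_comm]⟩ ▸ hr) hcR

end Switching

namespace PA

lemma coe_ne_zero (α : PA F m) : (α : Fin m → F) ≠ 0 := by
  obtain ⟨i, hi, -⟩ := α.2
  exact Function.ne_iff.2 ⟨i, by simp [hi]⟩

lemma eq_of_coe_eq_smul {α β : PA F m} {t : F} (h : (α : Fin m → F) = t • (β : Fin m → F)) :
    α = β := by
  obtain ⟨i, hi, hi0⟩ := α.2
  obtain ⟨j, hj, hj0⟩ := β.2
  have hαj : α.1 j = t := by simp [h, hj]
  obtain rfl : i = j := by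
    refine le_antisymm (not_lt.1 fun hji => ?_) (not_lt.1 fun hij => ?_)
    · have ht : t = 0 := hαj ▸ hi0 j hji
      simp [h, ht] at hi
    · simp [h, hj0 i hij] at hi
  ext1
  rw [h, ← hαj, hi, one_smul]

lemma exists_eq_smul {v : Fin m → F} (hv : v ≠ 0) :
    ∃ (β : PA F m) (t : F), t ≠ 0 ∧ v = t • (β : Fin m → F) := by
  obtain ⟨i, hi, hmin⟩ := WellFounded.has_min wellFounded_lt {i | v i ≠ 0}
    (Function.ne_iff.1 hv)
  have hzero : ∀ j < i, v j = 0 := fun j hj => of_not_not fun hvj => hmin j hvj hj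
  refine ⟨⟨(v i)⁻¹ • v, i, by simp [inv_mul_cancel₀ hi], fun j hj => by simp [hzero j hj]⟩,
    v i, hi, ?_⟩
  simp [smul_smul, mul_inv_cancel₀ hi]

end PA

def syndrome : (PA F m → F) →ₗ[F] (Fin m → F) :=
  Fintype.linearCombination F (fun α : PA F m => (α : Fin m → F))

lemma syndrome_single (α : PA F m) (t : F) :
    syndrome (Pi.single α t) = t • (α : Fin m → F) :=
  Fintype.linearCombination_apply_single _ _ _ _

lemma Hcode_eq_ker : Hcode F m = LinearMap.ker (syndrome (F := F) (m := m)) := rfl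

lemma nbhd_Hcode : nbhd (Hcode F m) = Set.univ := by
  refine Set.eq_univ_of_forall fun z => ?_
  by_cases hz : syndrome z = 0
  · exact ⟨z, hz, by simp⟩
  obtain ⟨β, t, -, hzβ⟩ := PA.exists_eq_smul hz
  refine ⟨z - Pi.single β t, ?_, ?_⟩
  · rw [Hcode_eq_ker, SetLike.mem_coe, LinearMap.mem_ker, map_sub, syndrome_single, ← hzβ,
      sub_self]
  · rw [hammingDist_eq_hammingNorm, neg_add_eq_sub, sub_sub_cancel]
    exact hammingNorm_single_le_one β t

lemma three_le_hammingNorm_of_mem_Hcode {c : PA F m → F} (hc : c ∈ Hcode F m) (h0 : c ≠ 0) :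
    3 ≤ hammingNorm c := by
  by_contra! hlt
  -- `c = y + c β • e_β` with `wt y ≤ 1`, so `syndrome c = 0` makes two distinct points proportional
  obtain ⟨β, hβ⟩ : ∃ β, c β ≠ 0 := Function.ne_iff.1 h0
  set y := Function.update c β 0 with hy
  have hy_norm : hammingNorm y ≤ 1 := by
    have := hammingNorm_update_zero_add_one hβ
    rw [← hy] at this
    omega
  have hsyn : syndrome y + c β • (β : Fin m → F) = 0 := by
    have hcy : c = y + Pi.single β (c β) := by
      ext γ
      by_cases hγ : γ = β <;> simp [hy, hγ]
    rw [← syndrome_single, ← map_add, ← hcy]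
    exact hc
  by_cases hy0 : y = 0
  · rw [hy0, map_zero, zero_add, smul_eq_zero] at hsyn
    exact hsyn.elim hβ (PA.coe_ne_zero β)
  obtain ⟨γ, hγ⟩ : ∃ γ, y γ ≠ 0 := Function.ne_iff.1 hy0
  have hγβ : γ ≠ β := by
    rintro rfl
    simp [hy] at hγ
  rw [eq_single_of_hammingNorm_le_one hy_norm hγ, syndrome_single] at hsyn
  refine hγβ (PA.eq_of_coe_eq_smul (t := -(y γ)⁻¹ * c β) ?_)
  apply smul_right_injective _ hγ
  have ht : y γ * (-(y γ)⁻¹ * c β) = -c β := by field_simp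
  beta_reduce
  rw [smul_smul, ht, neg_smul, eq_neg_iff_add_eq_zero]
  exact hsyn

lemma isOneCode_Hcode : IsOneCode (Hcode F m) := by
  refine isOneCode_of_three_le_hammingDist fun x hx y hy hne => ?_
  rw [hammingDist_eq_hammingNorm]
  refine three_le_hammingNorm_of_mem_Hcode ?_ (by simpa [neg_add_eq_zero] using hne)
  rw [Hcode_eq_ker] at hx hy ⊢
  exact add_mem (neg_mem hx) hy

lemma isPerfect_Hcode : IsPerfect (Hcode F m) :=
  isOneCode_Hcode.isPerfect nbhd_Hcode

lemma Rcomp_subset_Hcode (δ : PA F m) : (Rcomp δ : Set (PA F m → F)) ⊆ Hcode F m := by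
  rw [Hcode_eq_ker, SetLike.coe_subset_coe, Rcomp, Submodule.span_le]
  exact fun c hc => hc.1

lemma mem_Rcomp_of_hammingNorm_eq_three {δ : PA F m} {c : PA F m → F} (hc : c ∈ Hcode F m)
    (h3 : hammingNorm c = 3) (hδ : c δ ≠ 0) : c ∈ Rcomp δ := by
  have hgen : (c δ)⁻¹ • c ∈ {c | c ∈ Hcode F m ∧ hammingNorm c = 3 ∧ c δ = 1} := by
    refine ⟨?_, by rwa [hammingNorm_smul fun _ => .of_ne_zero (inv_ne_zero hδ)], by simp [hδ]⟩
    rw [Hcode_eq_ker] at hc ⊢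
    exact Submodule.smul_mem _ _ hc
  simpa [smul_smul, hδ] using (Rcomp δ).smul_mem (c δ) (Submodule.subset_span hgen)

lemma three_le_hammingDist_single_of_notMem_Rcomp {δ : PA F m} {c : PA F m → F}
    (hc : c ∈ Hcode F m) (hcR : c ∉ Rcomp δ) (a : F) :
    3 ≤ hammingDist c (Pi.single δ a) := by
  have h3 := three_le_hammingNorm_of_mem_Hcode hc fun h => hcR (h ▸ zero_mem _)
  by_cases hδ : c δ = 0
  · exact h3.trans (hammingNorm_le_hammingDist_single hδ a)
  · have hne3 : hammingNorm c ≠ 3 := fun h => hcR (mem_Rcomp_of_hammingNorm_eq_three hc h hδ)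
    have := hammingDist_triangle c (Pi.single δ a) 0
    rw [hammingDist_zero_right, hammingDist_zero_right] at this
    have := hammingNorm_single_le_one δ a
    omega

lemma nbhd_image_add_single_Rcomp_subset (δ : PA F m) (a b : F) :
    nbhd ((· + Pi.single δ a) '' (Rcomp δ : Set (PA F m → F))) ⊆
      nbhd ((· + Pi.single δ b) '' (Rcomp δ : Set (PA F m → F))) := by
  rintro y ⟨_, ⟨c, hc, rfl⟩, hcy⟩
  beta_reduce at hcy
  obtain ⟨h, hH, hhy⟩ : y - Pi.single δ b ∈ nbhd (Hcode F m) := by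
    rw [nbhd_Hcode]
    trivial
  rw [← hammingDist_add_right _ _ (Pi.single δ b : PA F m → F), sub_add_cancel] at hhy
  refine ⟨_, ⟨h, ?_, rfl⟩, hhy⟩
  -- otherwise `h - c ∈ H \ R_δ` would be within distance 2 of `(a - b) e_δ`
  by_contra hhR
  have hsub : h - c ∈ Hcode F m := by
    have hcH := Rcomp_subset_Hcode δ hc
    rw [Hcode_eq_ker] at hH hcH ⊢
    exact sub_mem hH hcH
  have h3 := three_le_hammingDist_single_of_notMem_Rcomp hsub
    (fun hmem => hhR (by simpa using add_mem hmem hc)) (a - b)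
  have hdist : hammingDist (h - c) (Pi.single δ (a - b)) =
      hammingDist (h + Pi.single δ b) (c + Pi.single δ a) := by
    rw [← hammingDist_add_right _ _ (c + Pi.single δ b), Pi.single_sub]
    congr 1 <;> abel
  have := hammingDist_triangle (h + Pi.single δ b) y (c + Pi.single δ a)
  rw [hammingDist_comm y] at this
  omega

lemma nbhd_image_add_single_Rcomp (δ : PA F m) (μ : F) :
    nbhd ((· + Pi.single δ μ) '' (Rcomp δ : Set (PA F m → F))) = nbhd (Rcomp δ : Set _) := by
  have h := nbhd_image_add_single_Rcomp_subset δ μ 0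
  have h' := nbhd_image_add_single_Rcomp_subset δ 0 μ
  simp only [Pi.single_zero, add_zero, Set.image_id'] at h h'
  exact h.antisymm h'

theorem stmt7 (δ : PA F m) (μ : F) :
    IsPerfect ((Hcode F m \ (Rcomp δ : Set (PA F m → F))) ∪
      ((· + Pi.single δ μ) '' (Rcomp δ : Set (PA F m → F)))) :=
  isPerfect_Hcode.switch (Rcomp_subset_Hcode δ)
    ((isOneCode_Hcode.mono (Rcomp_subset_Hcode δ)).image_add _)
    (nbhd_image_add_single_Rcomp δ μ)
end

section
/- Let C ⊂ F^{m-1} be a 1-code (a code with minimum distance ≥ 3), and Ċ = {(1,x) : x ∈ C} ⊂ A. Then the cosets R_δ + δ̄ − e^{(δ)}, δ ∈ Ċ, are pairwise disjoint subsets of the Hamming code H_m. -/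
variable {F : Type*} [Field F] [Fintype F] [DecidableEq F] {m : ℕ}

/-- The δ-component of the Hamming code associated with x, for δ = (1,x). -/
def compCoset {s : ℕ} (x : Fin s → F) : Set (PA F (s+1) → F) :=
  (· + (bar (Fin.cons 1 x) - Pi.single (consProj x) 1)) '' (Rcomp (consProj x) : Set (PA F (s+1) → F))

/-!
Membership: `bar δ - e_δ` has syndrome `δ - δ = 0`, and `R_δ` is spanned by codewords.

Disjointness: let `δ = (1, x)`, `γ = (1, y)` with `d(x, y) ≥ 3`, pick `j₀` with `x j₀ ≠ y j₀`, put
`W = ⟨δ, γ⟩`, `U = W + ⟨e_{j₀}⟩` and choose a functional `φ` vanishing on `W` with `φ e_{j₀} ≠ 0`.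
The functional `L c = ∑_{β ∈ U} c_β φ(β)` kills every weight-3 codeword whose support contains a
point of `W ∩ ker φ`: its two other support points lie either both in `U` or both outside `U`.
Hence `L` kills `R_δ` and `R_γ`. Since `d(x, y) ≥ 3`, no unit vector `e_j` with `j ∉ {0, j₀}`
lies in `U`, and `δ 0 = γ 0`, so `L (bar δ - e_δ) - L (bar γ - e_γ) = (x j₀ - y j₀) φ e_{j₀} ≠ 0`.
-/

open Finset

section IndicatorFunctional

variable {K E : Type*} [Field K] [AddCommGroup E] [Module K E] (U : Submodule K E)
  (φ : Module.Dual K E)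

lemma mul_indicator_eq_of_smul_mem {a : K} {p : E} (h : a • p ∈ U) :
    a * (U : Set E).indicator φ p = φ (a • p) := by
  by_cases hp : p ∈ U
  · rw [Set.indicator_of_mem hp, map_smul, smul_eq_mul]
  · obtain rfl : a = 0 := by_contra fun ha => hp ((U.smul_mem_iff ha).mp h)
    simp

lemma mul_indicator_add_mul_indicator_eq_zero {a b : K} {p r : E}
    (hU : a • p + b • r ∈ U) (hφ : φ (a • p + b • r) = 0) :
    a * (U : Set E).indicator φ p + b * (U : Set E).indicator φ r = 0 := by
  by_cases hp : a • p ∈ U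
  · have hr : b • r ∈ U := by simpa using U.sub_mem hU hp
    rw [mul_indicator_eq_of_smul_mem U φ hp, mul_indicator_eq_of_smul_mem U φ hr, ← map_add, hφ]
  · have hr : b • r ∉ U := fun hr => hp (by simpa using U.sub_mem hU hr)
    rw [Set.indicator_of_notMem fun h => hp (U.smul_mem a h),
      Set.indicator_of_notMem fun h => hr (U.smul_mem b h), mul_zero, mul_zero, add_zero]

lemma sum_smul_eq_of_filter_eq {ι M : Type*} [Fintype ι] [DecidableEq ι] [DecidableEq K]
    [AddCommMonoid M] [Module K M] {g : ι → K} {θ β₁ β₂ : ι}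
    (hsupp : univ.filter (g · ≠ 0) = {θ, β₁, β₂})
    (hθ : θ ∉ ({β₁, β₂} : Finset ι)) (h12 : β₁ ≠ β₂) (h : ι → M) :
    ∑ i, g i • h i = g θ • h θ + (g β₁ • h β₁ + g β₂ • h β₂) := by
  rw [← sum_filter_of_ne fun i _ hi => left_ne_zero_of_smul hi, hsupp,
    sum_insert hθ, sum_pair h12]

lemma exists_filter_eq_of_hammingNorm_eq_three {ι : Type*} [Fintype ι] [DecidableEq ι]
    [DecidableEq K] {g : ι → K} (h3 : hammingNorm g = 3) {θ : ι} (hθ : g θ ≠ 0) :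
    ∃ β₁ β₂, univ.filter (g · ≠ 0) = {θ, β₁, β₂} ∧ θ ∉ ({β₁, β₂} : Finset ι) ∧ β₁ ≠ β₂ := by
  have hθs : θ ∈ univ.filter (g · ≠ 0) := by simpa using hθ
  obtain ⟨β₁, β₂, h12, hpair⟩ := card_eq_two.mp
    (by rw [card_erase_of_mem hθs]; exact congrArg (· - 1) h3 :
      ((univ.filter (g · ≠ 0)).erase θ).card = 2)
  refine ⟨β₁, β₂, ?_, ?_, h12⟩
  · rw [← hpair, insert_erase hθs]
  · rw [← hpair]
    exact notMem_erase θ _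

lemma sum_mul_indicator_eq_zero_of_hammingNorm_eq_three {ι : Type*} [Fintype ι] [DecidableEq ι]
    [DecidableEq K] {v : ι → E} {g : ι → K} (hg : ∑ i, g i • v i = 0) (h3 : hammingNorm g = 3)
    {θ : ι} (hgθ : g θ ≠ 0) (hθU : v θ ∈ U) (hθφ : φ (v θ) = 0) :
    ∑ i, g i * (U : Set E).indicator φ (v i) = 0 := by
  obtain ⟨β₁, β₂, hsupp, hθ, h12⟩ := exists_filter_eq_of_hammingNorm_eq_three h3 hgθ
  rw [sum_smul_eq_of_filter_eq hsupp hθ h12] at hg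
  have hpair : g β₁ • v β₁ + g β₂ • v β₂ = -(g θ • v θ) := eq_neg_of_add_eq_zero_right hg
  simp_rw [← smul_eq_mul, sum_smul_eq_of_filter_eq hsupp hθ h12, Set.indicator_of_mem hθU, hθφ,
    smul_zero, zero_add, smul_eq_mul]
  refine mul_indicator_add_mul_indicator_eq_zero U φ ?_ ?_ <;> rw [hpair]
  · exact U.neg_mem (U.smul_mem _ hθU)
  · rw [map_neg, map_smul, hθφ, smul_zero, neg_zero]

end IndicatorFunctional

lemma hammingNorm_single_one {ι R : Type*} [Fintype ι] [DecidableEq ι] [Zero R] [One R]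
    [NeZero (1 : R)] [DecidableEq R] (i : ι) :
    hammingNorm (Pi.single i 1 : ι → R) = 1 := by
  simp [hammingNorm, Pi.single_apply, filter_eq']

lemma IsOneCode.three_le_hammingDist {K ι : Type*} [Field K] [DecidableEq K] [Fintype ι]
    [DecidableEq ι] {C : Set (ι → K)} (hC : IsOneCode C) {x y : ι → K}
    (hx : x ∈ C) (hy : y ∈ C) (hxy : x ≠ y) : 3 ≤ hammingDist x y := by
  by_contra! h
  obtain ⟨i, hi⟩ := Function.ne_iff.mp hxy
  have hxi : i ∈ univ.filter fun j => x j ≠ y j := by simpa using hi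
  refine hC x hx y hy hxy (Function.update y i (x i)) ⟨?_, ?_⟩
  · calc hammingDist x (Function.update y i (x i))
        ≤ ((univ.filter fun j => x j ≠ y j).erase i).card := by
          refine card_le_card fun j => ?_
          by_cases hj : j = i <;> simp [Function.update_apply, hj]
      _ ≤ 1 := by rw [card_erase_of_mem hxi]; unfold hammingDist at h; omega
  · calc hammingDist y (Function.update y i (x i)) ≤ ({i} : Finset ι).card := by
          refine card_le_card fun j => ?_
          by_cases hj : j = i <;> simp [Function.update_apply, hj]
      _ = 1 := card_singleton i

lemma hammingNorm_eq_hammingDist_of_mem_span_pair {K : Type*} [Field K] [DecidableEq K] {s : ℕ}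
    {x y : Fin s → K} {v : Fin (s + 1) → K}
    (hv : v ∈ Submodule.span K {Fin.cons 1 x, Fin.cons 1 y}) (hv0 : v 0 = 0) (hne : v ≠ 0) :
    hammingNorm v = hammingDist x y := by
  obtain ⟨a, b, rfl⟩ := Submodule.mem_span_pair.mp hv
  obtain rfl : b = -a := by simpa [add_eq_zero_iff_eq_neg'] using hv0
  have ha : a ≠ 0 := by rintro rfl; simp at hne
  simp [hammingNorm, hammingDist, card_filter, Fin.sum_univ_succ, add_neg_eq_zero,
    mul_right_inj' ha]

lemma hammingNorm_single_sub_smul_single_le_two {ι K : Type*} [Fintype ι] [DecidableEq ι] [Field K]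
    [DecidableEq K] (i j : ι) (c : K) :
    hammingNorm (Pi.single i 1 - c • Pi.single j 1 : ι → K) ≤ 2 :=
  calc hammingNorm (Pi.single i 1 - c • Pi.single j 1 : ι → K) ≤ #{i, j} := by
        refine card_le_card fun k => ?_
        by_cases hki : k = i <;> by_cases hkj : k = j <;> simp [hki, hkj]
    _ ≤ 2 := card_le_two

section TwoPoints

variable {K : Type*} [Field K] [DecidableEq K] {s : ℕ} {x y : Fin s → K}

lemma single_succ_notMem_span_pair (hxy : 3 ≤ hammingDist x y) (j : Fin s) :
    (Pi.single j.succ 1 : Fin (s + 1) → K) ∉ Submodule.span K {Fin.cons 1 x, Fin.cons 1 y} := by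
  intro h
  have := hammingNorm_eq_hammingDist_of_mem_span_pair h (by simp) (by simp)
  rw [hammingNorm_single_one] at this
  omega

lemma single_succ_notMem_sup_span_singleton (hxy : 3 ≤ hammingDist x y) {j j₀ : Fin s}
    (hj : j ≠ j₀) :
    (Pi.single j.succ 1 : Fin (s + 1) → K) ∉
      Submodule.span K {Fin.cons 1 x, Fin.cons 1 y} ⊔ K ∙ Pi.single j₀.succ 1 := by
  intro h
  obtain ⟨w, hw, u, hu, hwu⟩ := Submodule.mem_sup.mp h
  obtain ⟨c, rfl⟩ := Submodule.mem_span_singleton.mp hu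
  obtain rfl := eq_sub_of_add_eq hwu
  have hne : (Pi.single j.succ 1 - c • Pi.single j₀.succ 1 : Fin (s + 1) → K) ≠ 0 :=
    fun h0 => by simpa [hj] using congrFun h0 j.succ
  have := hammingNorm_eq_hammingDist_of_mem_span_pair hw (by simp) hne
  have := hammingNorm_single_sub_smul_single_le_two j.succ j₀.succ c
  omega

end TwoPoints

section HammingCode

variable {M : Type*} [AddCommGroup M] [Module F M]

lemma mem_Hcode_iff {c : PA F m → F} :
    c ∈ Hcode F m ↔ Fintype.linearCombination F Subtype.val c = 0 := Iff.rfl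

lemma linearCombination_bar (h : PA F m → M) (v : Fin m → F) :
    Fintype.linearCombination F h (bar v) = ∑ i, v i • h (singleProj i) := by
  simp_rw [Fintype.linearCombination_apply, bar, sum_smul]
  rw [sum_comm]
  refine sum_congr rfl fun i _ => ?_
  rw [sum_eq_single (singleProj i)]
  · simp [singleProj]
  · intro β _ hβ
    rw [if_neg (show β.val ≠ Pi.single i 1 from fun h => hβ (Subtype.ext h)), zero_smul]
  · simp

lemma linearCombination_bar_sub_single (h : PA F m → M) (v : Fin m → F) (θ : PA F m) :
    Fintype.linearCombination F h (bar v - Pi.single θ 1) = ∑ i, v i • h (singleProj i) - h θ := by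
  rw [map_sub, linearCombination_bar, Fintype.linearCombination_apply_single, one_smul]

lemma bar_sub_single_mem_Hcode (θ : PA F m) : bar θ.val - Pi.single θ 1 ∈ Hcode F m := by
  rw [mem_Hcode_iff, linearCombination_bar_sub_single, sub_eq_zero]
  exact (pi_eq_sum_univ' θ.val).symm

lemma Rcomp_le_ker_val (θ : PA F m) :
    Rcomp θ ≤ LinearMap.ker (Fintype.linearCombination F (Subtype.val : PA F m → Fin m → F)) :=
  Submodule.span_le.mpr fun _ hc => hc.1

lemma Rcomp_le_ker_indicator {U : Submodule F (Fin m → F)} {φ : Module.Dual F (Fin m → F)}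
    {θ : PA F m} (hθU : θ.val ∈ U) (hθφ : φ θ.val = 0) :
    Rcomp θ ≤ LinearMap.ker
      (Fintype.linearCombination F fun β : PA F m => (U : Set (Fin m → F)).indicator φ β.val) :=
  Submodule.span_le.mpr fun _ ⟨hg, h3, hgθ⟩ =>
    sum_mul_indicator_eq_zero_of_hammingNorm_eq_three U φ hg h3 (by simp [hgθ]) hθU hθφ

lemma compCoset_subset_Hcode {s : ℕ} (x : Fin s → F) : compCoset x ⊆ Hcode F (s + 1) := by
  rintro _ ⟨r, hr, rfl⟩
  rw [mem_Hcode_iff, map_add, Rcomp_le_ker_val _ hr, zero_add]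
  exact bar_sub_single_mem_Hcode (consProj x)

end HammingCode

lemma exists_functional_separating_compCosets {s : ℕ} {x y : Fin s → F}
    (hxy : 3 ≤ hammingDist x y) :
    ∃ L : (PA F (s + 1) → F) →ₗ[F] F,
      Rcomp (consProj x) ≤ LinearMap.ker L ∧ Rcomp (consProj y) ≤ LinearMap.ker L ∧
      L (bar (Fin.cons 1 x) - Pi.single (consProj x) 1) ≠
        L (bar (Fin.cons 1 y) - Pi.single (consProj y) 1) := by
  obtain ⟨j₀, hj₀⟩ := Function.ne_iff.mp (hammingDist_pos.mp (by omega : 0 < hammingDist x y))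
  set W := Submodule.span F {(Fin.cons 1 x : Fin (s + 1) → F), Fin.cons 1 y}
  set e₀ : Fin (s + 1) → F := Pi.single j₀.succ 1
  obtain ⟨φ, hφe₀, hWφ⟩ :=
    Submodule.exists_le_ker_of_notMem (single_succ_notMem_span_pair hxy j₀)
  set U := W ⊔ F ∙ e₀
  set f : PA F (s + 1) → F := fun β => (U : Set (Fin (s + 1) → F)).indicator φ β.val
  have hf : ∀ z : Fin s → F, (Fin.cons 1 z : Fin (s + 1) → F) ∈ W →
      Fintype.linearCombination F f (bar (Fin.cons 1 z) - Pi.single (consProj z) 1) =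
        f (singleProj 0) + z j₀ * φ e₀ := by
    intro z hz
    have hzφ : f (consProj z) = 0 :=
      (Set.indicator_of_mem (le_sup_left (a := W) hz) φ).trans (hWφ hz)
    have hsingle : ∀ j, j ≠ j₀ → f (singleProj j.succ) = 0 := fun j hj =>
      Set.indicator_of_notMem (single_succ_notMem_sup_span_singleton hxy hj) φ
    have he₀ : f (singleProj j₀.succ) = φ e₀ :=
      Set.indicator_of_mem (le_sup_right (a := W) (Submodule.mem_span_singleton_self e₀)) φ
    rw [linearCombination_bar_sub_single, hzφ, sub_zero, Fin.sum_univ_succ,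
      sum_eq_single j₀ (fun j _ hj => by rw [hsingle j hj, smul_zero]) (by simp)]
    simp [he₀]
  have hδ : (Fin.cons 1 x : Fin (s + 1) → F) ∈ W := Submodule.subset_span (Set.mem_insert _ _)
  have hγ : (Fin.cons 1 y : Fin (s + 1) → F) ∈ W :=
    Submodule.subset_span (Set.mem_insert_of_mem _ rfl)
  refine ⟨Fintype.linearCombination F f,
    Rcomp_le_ker_indicator (le_sup_left (a := W) hδ) (hWφ hδ),
    Rcomp_le_ker_indicator (le_sup_left (a := W) hγ) (hWφ hγ), ?_⟩
  rw [hf x hδ, hf y hγ]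
  exact fun h => hj₀ (mul_right_cancel₀ hφe₀ (add_left_cancel h))

theorem stmt10 {s : ℕ} (C : Set (Fin s → F)) (hC : IsOneCode C) :
    (∀ x ∈ C, compCoset x ⊆ Hcode F (s+1)) ∧
    (∀ x ∈ C, ∀ y ∈ C, x ≠ y → Disjoint (compCoset x) (compCoset y)) := by
  refine ⟨fun x _ => compCoset_subset_Hcode x, fun x hx y hy hxy => ?_⟩
  obtain ⟨L, hLx, hLy, hL⟩ :=
    exists_functional_separating_compCosets (hC.three_le_hammingDist hx hy hxy)
  rw [Set.disjoint_left]
  rintro _ ⟨r, hr, rfl⟩ ⟨r', hr', h⟩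
  apply hL
  simpa [LinearMap.mem_ker.mp (hLx hr), LinearMap.mem_ker.mp (hLy hr')] using congrArg L h.symm
end
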